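/- For each t ∈ {0,1,…,T−1} and each k ∈ ℕ, the function a ↦ G_t(a,k) is convex on ℤ: for all a ∈ ℤ, G_t(a+1,k) + G_t(a−1,k) ≥ 2·G_t(a,k). -/

import Mathlib

open Filter

/-- Negative Binomial pmf with real shape `r` and success probability `p`:
`NB(r,p)(z) = Γ(z+r)/(Γ(r)·z!)·p^r·(1−p)^z` for `r > 0`, and `NB(0,p)` is
the point mass at `0`. -/
noncomputable def NB (r p : ℝ) (z : ℕ) : ℝ :=
  if r = 0 then (if z = 0 then (1 : ℝ) else 0)
  else Real.Gamma ((z : ℝ) + r) / (Real.Gamma r * (Nat.factorial z : ℝ)) * p ^ r * (1 - p) ^ z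

/-- `p_t = (β0 + N·t)/(β0 + N·t + 1)`. -/
noncomputable def pt (β0 : ℝ) (N t : ℕ) : ℝ :=
  (β0 + (N : ℝ) * (t : ℝ)) / (β0 + (N : ℝ) * (t : ℝ) + 1)

/-- Expectation `E_{(Z,K)}[f(Z,K)]` with `Z ~ NB(α0+k, p_t)` and
`K ~ NB((N−1)(α0+k), p_t)` independent. -/
noncomputable def EZK (α0 β0 : ℝ) (N t k : ℕ) (f : ℕ → ℕ → ℝ) : ℝ :=
  ∑' z : ℕ, ∑' κ : ℕ,
    NB (α0 + (k : ℝ)) (pt β0 N t) z * NB (((N : ℝ) - 1) * (α0 + (k : ℝ))) (pt β0 N t) κ * f z κ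

/-- One-period cost plus cost-to-go of ordering up to level `a` at stage `(t,k)`. -/
noncomputable def G (α0 β0 : ℝ) (N : ℕ) (cv ch cb : ℝ) (W : ℕ → ℤ → ℕ → ℝ)
    (t : ℕ) (a : ℤ) (k : ℕ) : ℝ :=
  cv * (a : ℝ)
    + ch * ∑' z : ℕ, NB (α0 + (k : ℝ)) (pt β0 N t) z * max ((a : ℝ) - (z : ℝ)) 0
    + cb * ∑' z : ℕ, NB (α0 + (k : ℝ)) (pt β0 N t) z * max ((z : ℝ) - (a : ℝ)) 0
    + EZK α0 β0 N t k (fun z κ => W (t + 1) (a - (z : ℤ)) (k + z + κ))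

/-!
Backward induction on `t`. Call `V : ℤ → ℕ → ℝ` admissible if it is nonnegative, grows at most
linearly in `|x| + m`, and is discretely convex in `x`; `W_T = 0` is admissible. If `W_{t+1}` is
admissible, every term of `G_t(·, k)` is a nonnegative mixture of discretely convex functions of
`a`, and the series converge because the negative binomial laws are probability distributions with
finite mean `r (1 - p) / p`. So `G_t(·, k)` is convex, bounded below by `c_v a`, and of linear
growth; and `x ↦ inf_{a ≥ x} G_t(a, k)` inherits convexity, making `W_t` admissible again.
-/

lemma Real.Gamma_nat_add_eq_ascPochhammer_mul {r : ℝ} (hr : 0 < r) (n : ℕ) :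
    Real.Gamma (n + r) = (ascPochhammer ℝ n).eval r * Real.Gamma r := by
  induction n with
  | zero => simp
  | succ n ih =>
    rw [ascPochhammer_succ_eval, Nat.cast_succ, add_right_comm,
      Real.Gamma_add_one (by positivity), ih]
    ring

lemma Ring.choose_add_sub_one_eq_Gamma_div {r : ℝ} (hr : 0 < r) (n : ℕ) :
    Ring.choose (r + n - 1) n = Real.Gamma (n + r) / (Real.Gamma r * n.factorial) := by
  rw [Ring.choose_eq_smul, Polynomial.descPochhammer_smeval_eq_ascPochhammer,
    Polynomial.ascPochhammer_smeval_eq_eval, Real.Gamma_nat_add_eq_ascPochhammer_mul hr,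
    show r + n - 1 - n + 1 = r by ring, smul_eq_mul]
  have := (Real.Gamma_pos_of_pos hr).ne'
  field_simp

structure IsPMFWithMean (w : ℕ → ℝ) (μ : ℝ) : Prop where
  nonneg : ∀ z, 0 ≤ w z
  hasSum : HasSum w 1
  hasSum_mul : HasSum (fun z : ℕ => (z : ℝ) * w z) μ

section NB

variable {r p : ℝ}

lemma NB_nonneg (hr : 0 ≤ r) (hp : 0 ≤ p) (hp1 : p ≤ 1) (z : ℕ) : 0 ≤ NB r p z := by
  have : 0 ≤ 1 - p := by linarith
  unfold NB
  split_ifs <;> positivity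

/-- The negative binomial series `∑ C(r+z-1, z) x^z = (1 - x)^(-r)` at `x = 1 - p`. -/
lemma hasSum_NB (hr : 0 ≤ r) (hp : 0 < p) (hp1 : p ≤ 1) : HasSum (NB r p) 1 := by
  rcases hr.eq_or_lt with rfl | hr
  · convert hasSum_ite_eq 0 (1 : ℝ) using 1
    ext z
    simp [NB]
  have hx : 1 - p ∈ Metric.eball (0 : ℝ) 1 := by
    have : |1 - p| < 1 := abs_lt.2 ⟨by linarith, by linarith⟩
    simpa [enorm_eq_nnnorm, ← NNReal.coe_lt_coe] using this
  have hs := (Real.one_div_one_sub_rpow_hasFPowerSeriesOnBall_zero r).hasSum hx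
  simp only [FormalMultilinearSeries.ofScalars_apply_eq, zero_add, sub_sub_cancel,
    smul_eq_mul] at hs
  have hs' := hs.mul_left (p ^ r)
  rw [mul_one_div_cancel (Real.rpow_pos_of_pos hp r).ne'] at hs'
  refine hs'.congr_fun fun z => ?_
  rw [NB, if_neg hr.ne', Ring.choose_add_sub_one_eq_Gamma_div hr]
  ring

lemma succ_mul_NB_succ (hr : 0 < r) (hp : 0 < p) (z : ℕ) :
    ((z : ℝ) + 1) * NB r p (z + 1) = r * (1 - p) / p * NB (r + 1) p z := by
  have hr1 : r + 1 ≠ 0 := by positivity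
  rw [NB, NB, if_neg hr.ne', if_neg hr1, Nat.factorial_succ, Nat.cast_mul, Nat.cast_succ,
    show (z : ℝ) + 1 + r = z + r + 1 by ring, ← add_assoc,
    Real.Gamma_add_one (by positivity), Real.Gamma_add_one hr.ne', Real.rpow_add_one hp.ne',
    pow_succ]
  have := (Real.Gamma_pos_of_pos hr).ne'
  field_simp

lemma hasSum_mul_NB (hr : 0 ≤ r) (hp : 0 < p) (hp1 : p ≤ 1) :
    HasSum (fun z : ℕ => (z : ℝ) * NB r p z) (r * (1 - p) / p) := by
  rcases hr.eq_or_lt with rfl | hr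
  · rw [zero_mul, zero_div]
    convert hasSum_zero with z
    rcases z with _ | z <;> simp [NB]
  rw [← hasSum_nat_add_iff' 1]
  simpa [succ_mul_NB_succ hr hp] using
    (hasSum_NB (by positivity : 0 ≤ r + 1) hp hp1).mul_left (r * (1 - p) / p)

lemma isPMFWithMean_NB (hr : 0 ≤ r) (hp : 0 < p) (hp1 : p ≤ 1) :
    IsPMFWithMean (NB r p) (r * (1 - p) / p) :=
  ⟨NB_nonneg hr hp.le hp1, hasSum_NB hr hp hp1, hasSum_mul_NB hr hp hp1⟩

end NB

namespace IsPMFWithMean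

variable {w w' : ℕ → ℝ} {μ μ' A B B' : ℝ}

lemma summable_mul_of_le (hw : IsPMFWithMean w μ) {f : ℕ → ℝ} (hf0 : ∀ z, 0 ≤ f z)
    (hf : ∀ z, f z ≤ A + B * z) : Summable fun z => w z * f z :=
  Summable.of_nonneg_of_le (fun z => mul_nonneg (hw.nonneg z) (hf0 z))
    (fun z => by nlinarith [mul_le_mul_of_nonneg_left (hf z) (hw.nonneg z)])
    ((hw.hasSum.summable.mul_left A).add (hw.hasSum_mul.summable.mul_left B))

lemma tsum_mul_le (hw : IsPMFWithMean w μ) {f : ℕ → ℝ} (hf0 : ∀ z, 0 ≤ f z)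
    (hf : ∀ z, f z ≤ A + B * z) : ∑' z, w z * f z ≤ A + B * μ := by
  have hsum := (hw.hasSum.mul_left A).add (hw.hasSum_mul.mul_left B)
  rw [mul_one] at hsum
  exact hasSum_le (fun z => by nlinarith [mul_le_mul_of_nonneg_left (hf z) (hw.nonneg z)])
    (hw.summable_mul_of_le hf0 hf).hasSum hsum

variable {F : ℕ → ℕ → ℝ}

lemma summable_mul_mul (hw' : IsPMFWithMean w' μ')
    (hF0 : ∀ z κ, 0 ≤ F z κ) (hF : ∀ z κ, F z κ ≤ A + B * z + B' * κ) (z : ℕ) :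
    Summable fun κ => w z * w' κ * F z κ := by
  simpa only [mul_assoc] using
    (hw'.summable_mul_of_le (hF0 z) (hF z)).mul_left (w z)

lemma tsum_mul_mul_eq (z : ℕ) : ∑' κ, w z * w' κ * F z κ = w z * ∑' κ, w' κ * F z κ := by
  simp only [mul_assoc, tsum_mul_left]

lemma summable_tsum_mul_mul (hw : IsPMFWithMean w μ) (hw' : IsPMFWithMean w' μ')
    (hF0 : ∀ z κ, 0 ≤ F z κ) (hF : ∀ z κ, F z κ ≤ A + B * z + B' * κ) :
    Summable fun z => ∑' κ, w z * w' κ * F z κ := by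
  simp only [tsum_mul_mul_eq]
  refine hw.summable_mul_of_le (A := A + B' * μ') (B := B)
    (fun z => tsum_nonneg fun κ => mul_nonneg (hw'.nonneg κ) (hF0 z κ)) fun z => ?_
  linarith [hw'.tsum_mul_le (hF0 z) (hF z)]

lemma tsum_tsum_mul_mul_le (hw : IsPMFWithMean w μ) (hw' : IsPMFWithMean w' μ')
    (hF0 : ∀ z κ, 0 ≤ F z κ) (hF : ∀ z κ, F z κ ≤ A + B * z + B' * κ) :
    ∑' z, ∑' κ, w z * w' κ * F z κ ≤ A + B' * μ' + B * μ := by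
  simp only [tsum_mul_mul_eq]
  refine hw.tsum_mul_le (fun z => tsum_nonneg fun κ => mul_nonneg (hw'.nonneg κ) (hF0 z κ))
    fun z => ?_
  linarith [hw'.tsum_mul_le (hF0 z) (hF z)]

end IsPMFWithMean

def DiscreteConvex (f : ℤ → ℝ) : Prop :=
  ∀ a, 2 * f a ≤ f (a + 1) + f (a - 1)

instance (x : ℤ) : Nonempty {a : ℤ // x ≤ a} := ⟨⟨x, le_rfl⟩⟩

namespace DiscreteConvex

variable {f g : ℤ → ℝ}

lemma add (hf : DiscreteConvex f) (hg : DiscreteConvex g) : DiscreteConvex fun a => f a + g a :=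
  fun a => by linarith [hf a, hg a]

lemma const_mul (hf : DiscreteConvex f) {c : ℝ} (hc : 0 ≤ c) : DiscreteConvex fun a => c * f a :=
  fun a => by nlinarith [mul_le_mul_of_nonneg_left (hf a) hc]

lemma comp_sub_const (hf : DiscreteConvex f) (c : ℤ) : DiscreteConvex fun a => f (a - c) :=
  fun a => by simpa only [sub_add_eq_add_sub, sub_right_comm] using hf (a - c)

lemma tsum {ι : Type*} {F : ℤ → ι → ℝ} (hF : ∀ i, DiscreteConvex fun a => F a i)
    (hs : ∀ a, Summable (F a)) : DiscreteConvex fun a => ∑' i, F a i := fun a => by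
  rw [← tsum_mul_left, ← (hs _).tsum_add (hs _)]
  exact ((hs a).mul_left 2).tsum_le_tsum (fun i => hF i a) ((hs _).add (hs _))

lemma monotoneOn_Ici (hf : DiscreteConvex f) {b : ℤ} (hb : f b ≤ f (b + 1)) :
    MonotoneOn f (Set.Ici b) := by
  have step : ∀ c, b ≤ c → f c ≤ f (c + 1) := by
    intro c hc
    induction c, hc using Int.leInduction with
    | base => exact hb
    | succ c _ ih => linarith [add_sub_cancel_right c 1 ▸ hf (c + 1)]
  exact monotoneOn_of_le_add_one Set.ordConnected_Ici fun c _ hc _ => step c hc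

/-- Either the infimum over `[x, ∞)` is at most `f (x - 1)`, and then it is at most both
neighbouring infima; or `f (x - 1) < f x`, and then `f` is nondecreasing from `x - 1` on, so the
neighbouring infima are `f (x + 1)` and `f (x - 1)`. -/
lemma iInf_Ici (hf : DiscreteConvex f)
    (hbdd : ∀ x, BddBelow (Set.range fun a : {a : ℤ // x ≤ a} => f a)) :
    DiscreteConvex fun x => ⨅ a : {a : ℤ // x ≤ a}, f a := by
  intro x
  have inf_le : ∀ y b : ℤ, y ≤ b → ⨅ a : {a : ℤ // y ≤ a}, f a ≤ f b :=
    fun y b h => ciInf_le (hbdd y) ⟨b, h⟩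
  by_cases hc : ⨅ a : {a : ℤ // x ≤ a}, f a ≤ f (x - 1)
  · have hup : ⨅ a : {a : ℤ // x ≤ a}, f a ≤ ⨅ a : {a : ℤ // x + 1 ≤ a}, f a :=
      le_ciInf fun b => inf_le x b (by linarith [b.2])
    have hdown : ⨅ a : {a : ℤ // x ≤ a}, f a ≤ ⨅ a : {a : ℤ // x - 1 ≤ a}, f a := by
      refine le_ciInf fun b => ?_
      rcases lt_or_ge (b : ℤ) x with h | h
      · rwa [show (b : ℤ) = x - 1 by linarith [b.2]]
      · exact inf_le x b h
    linarith
  · have hmono := hf.monotoneOn_Ici (b := x - 1)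
      (by rw [sub_add_cancel]; linarith [inf_le x x le_rfl])
    have ge_of_mono : ∀ y, x - 1 ≤ y → f y ≤ ⨅ a : {a : ℤ // y ≤ a}, f a := fun y hy =>
      le_ciInf fun b => hmono (Set.mem_Ici.2 hy) (Set.mem_Ici.2 (hy.trans b.2)) b.2
    linarith [hf x, inf_le x x le_rfl, ge_of_mono (x + 1) (by linarith),
      ge_of_mono (x - 1) le_rfl]

end DiscreteConvex

lemma discreteConvex_mul_cast (c : ℝ) : DiscreteConvex fun a : ℤ => c * a :=
  fun a => le_of_eq (by push_cast; ring)

lemma ConvexOn.discreteConvex {φ : ℝ → ℝ} (h : ConvexOn ℝ Set.univ φ) :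
    DiscreteConvex fun a : ℤ => φ a := fun a => by
  have := h.2 (Set.mem_univ (a + 1 : ℝ)) (Set.mem_univ (a - 1 : ℝ))
    (by norm_num : (0 : ℝ) ≤ 1 / 2) (by norm_num : (0 : ℝ) ≤ 1 / 2) (by norm_num)
  simp only [smul_eq_mul, show 1 / 2 * ((a : ℝ) + 1) + 1 / 2 * (a - 1) = a by ring] at this
  push_cast
  linarith

lemma max_sub_natCast_le (a : ℤ) (z : ℕ) : max ((a : ℝ) - z) 0 ≤ |(a : ℝ)| + 0 * z :=
  max_le (by linarith [le_abs_self (a : ℝ), z.cast_nonneg (α := ℝ)]) (by positivity)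

lemma max_natCast_sub_le (a : ℤ) (z : ℕ) : max ((z : ℝ) - a) 0 ≤ |(a : ℝ)| + 1 * z :=
  max_le (by linarith [neg_abs_le (a : ℝ)]) (by positivity)

structure IsAdmissible (V : ℤ → ℕ → ℝ) : Prop where
  nonneg : ∀ x m, 0 ≤ V x m
  le_linear : ∃ C, 0 ≤ C ∧ ∀ x m, V x m ≤ C * (1 + |(x : ℝ)| + m)
  convex : ∀ m, DiscreteConvex fun x => V x m

lemma le_linear_sub_add {V : ℤ → ℕ → ℝ} {C : ℝ} (hC0 : 0 ≤ C)
    (hC : ∀ x m, V x m ≤ C * (1 + |(x : ℝ)| + m)) (a : ℤ) (k z κ : ℕ) :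
    V (a - z) (k + z + κ) ≤ C * (1 + |(a : ℝ)| + k) + 2 * C * z + C * κ := by
  have habs : |(a : ℝ) - z| ≤ |(a : ℝ)| + z := by
    simpa using abs_sub (a : ℝ) z
  have := hC (a - z) (k + z + κ)
  push_cast at this
  nlinarith [mul_le_mul_of_nonneg_left habs hC0]

section Stage

variable {α0 β0 cv ch cb : ℝ} {N t : ℕ} {W : ℕ → ℤ → ℕ → ℝ}

lemma pt_pos (hβ0 : 0 < β0) : 0 < pt β0 N t := by
  unfold pt
  positivity

lemma pt_le_one (hβ0 : 0 < β0) : pt β0 N t ≤ 1 := by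
  unfold pt
  rw [div_le_one (by positivity)]
  linarith

lemma isPMFWithMean_NB_demand (hα0 : 0 ≤ α0) (hβ0 : 0 < β0) (k : ℕ) :
    IsPMFWithMean (NB (α0 + k) (pt β0 N t)) ((α0 + k) * (1 - pt β0 N t) / pt β0 N t) :=
  isPMFWithMean_NB (by positivity) (pt_pos hβ0) (pt_le_one hβ0)

lemma isPMFWithMean_NB_others (hα0 : 0 ≤ α0) (hβ0 : 0 < β0) (hN : 1 ≤ N) (k : ℕ) :
    IsPMFWithMean (NB ((N - 1) * (α0 + k)) (pt β0 N t))
      ((N - 1) * (α0 + k) * (1 - pt β0 N t) / pt β0 N t) :=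
  isPMFWithMean_NB (mul_nonneg (by simpa using hN) (by positivity)) (pt_pos hβ0) (pt_le_one hβ0)

lemma G_convex_of_isAdmissible (hα0 : 0 ≤ α0) (hβ0 : 0 < β0) (hN : 1 ≤ N) (hch : 0 ≤ ch)
    (hcb : 0 ≤ cb) (hW : IsAdmissible (W (t + 1))) (k : ℕ) :
    DiscreteConvex fun a => G α0 β0 N cv ch cb W t a k := by
  have hZ := isPMFWithMean_NB_demand (N := N) (t := t) hα0 hβ0 k
  have hK := isPMFWithMean_NB_others (t := t) hα0 hβ0 hN k
  obtain ⟨C, hC0, hC⟩ := hW.le_linear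
  have holding : DiscreteConvex fun a : ℤ =>
      ∑' z : ℕ, NB (α0 + k) (pt β0 N t) z * max ((a : ℝ) - z) 0 :=
    DiscreteConvex.tsum (fun z => (ConvexOn.discreteConvex ((convexOn_id convex_univ).sub
        (concaveOn_const _ convex_univ) |>.sup (convexOn_const 0 convex_univ))).const_mul
        (hZ.nonneg z))
      fun a => hZ.summable_mul_of_le (fun z => le_max_right _ _) (max_sub_natCast_le a)
  have backorder : DiscreteConvex fun a : ℤ =>
      ∑' z : ℕ, NB (α0 + k) (pt β0 N t) z * max ((z : ℝ) - a) 0 :=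
    DiscreteConvex.tsum (fun z => (ConvexOn.discreteConvex ((convexOn_const _ convex_univ).sub
        (concaveOn_id convex_univ) |>.sup (convexOn_const 0 convex_univ))).const_mul
        (hZ.nonneg z))
      fun a => hZ.summable_mul_of_le (fun z => le_max_right _ _) (max_natCast_sub_le a)
  have future : DiscreteConvex fun a : ℤ =>
      EZK α0 β0 N t k fun z κ => W (t + 1) (a - z) (k + z + κ) :=
    DiscreteConvex.tsum
      (fun z => DiscreteConvex.tsum
        (fun κ => ((hW.convex _).comp_sub_const z).const_mul
          (mul_nonneg (hZ.nonneg z) (hK.nonneg κ)))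
        fun a => hK.summable_mul_mul (fun _ _ => hW.nonneg _ _)
          (le_linear_sub_add hC0 hC a k) z)
      fun a => hZ.summable_tsum_mul_mul hK (fun _ _ => hW.nonneg _ _)
        (le_linear_sub_add hC0 hC a k)
  exact (((discreteConvex_mul_cast cv).add (holding.const_mul hch)).add
    (backorder.const_mul hcb)).add future

lemma mul_le_G (hα0 : 0 ≤ α0) (hβ0 : 0 < β0) (hN : 1 ≤ N) (hch : 0 ≤ ch) (hcb : 0 ≤ cb)
    (hW0 : ∀ x m, 0 ≤ W (t + 1) x m) (a : ℤ) (k : ℕ) :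
    cv * a ≤ G α0 β0 N cv ch cb W t a k := by
  have hZ := isPMFWithMean_NB_demand (N := N) (t := t) hα0 hβ0 k
  have hK := isPMFWithMean_NB_others (t := t) hα0 hβ0 hN k
  have h1 : 0 ≤ ∑' z : ℕ, NB (α0 + k) (pt β0 N t) z * max ((a : ℝ) - z) 0 :=
    tsum_nonneg fun z => mul_nonneg (hZ.nonneg z) (le_max_right _ _)
  have h2 : 0 ≤ ∑' z : ℕ, NB (α0 + k) (pt β0 N t) z * max ((z : ℝ) - a) 0 :=
    tsum_nonneg fun z => mul_nonneg (hZ.nonneg z) (le_max_right _ _)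
  have h3 : 0 ≤ EZK α0 β0 N t k fun z κ => W (t + 1) (a - z) (k + z + κ) :=
    tsum_nonneg fun z => tsum_nonneg fun κ =>
      mul_nonneg (mul_nonneg (hZ.nonneg z) (hK.nonneg κ)) (hW0 _ _)
  unfold G
  nlinarith [mul_nonneg hch h1, mul_nonneg hcb h2]

lemma exists_G_sub_le (hα0 : 0 ≤ α0) (hβ0 : 0 < β0) (hN : 1 ≤ N) (hch : 0 ≤ ch) (hcb : 0 ≤ cb)
    (hW : IsAdmissible (W (t + 1))) :
    ∃ K, 0 ≤ K ∧ ∀ a k, G α0 β0 N cv ch cb W t a k - cv * a ≤ K * (1 + |(a : ℝ)| + k) := by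
  obtain ⟨C, hC0, hC⟩ := hW.le_linear
  set q := (1 - pt β0 N t) / pt β0 N t with hq_def
  have hq : 0 ≤ q := div_nonneg (by linarith [pt_le_one (N := N) (t := t) hβ0])
    (pt_pos hβ0).le
  have hN' : (1 : ℝ) ≤ N := by exact_mod_cast hN
  refine ⟨ch + cb + C + (cb + C * (N + 1)) * (α0 + 1) * q, by positivity, fun a k => ?_⟩
  have hZ := isPMFWithMean_NB_demand (N := N) (t := t) hα0 hβ0 k
  have hK := isPMFWithMean_NB_others (t := t) hα0 hβ0 hN k
  have holding := hZ.tsum_mul_le (fun z => le_max_right _ _) (max_sub_natCast_le a)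
  have backorder := hZ.tsum_mul_le (fun z => le_max_right _ _) (max_natCast_sub_le a)
  have future := hZ.tsum_tsum_mul_mul_le hK (fun _ _ => hW.nonneg _ _)
    (le_linear_sub_add hC0 hC a k)
  simp only [mul_div_assoc, ← hq_def] at holding backorder future
  have hμ : (α0 + k) * q ≤ (α0 + 1) * q * (1 + |(a : ℝ)| + k) := by
    have : α0 + k ≤ (α0 + 1) * (1 + |(a : ℝ)| + k) := by
      nlinarith [abs_nonneg (a : ℝ), k.cast_nonneg (α := ℝ)]
    nlinarith
  have haL : |(a : ℝ)| ≤ 1 + |(a : ℝ)| + k := by linarith [k.cast_nonneg (α := ℝ)]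
  unfold G EZK
  beta_reduce
  nlinarith [mul_le_mul_of_nonneg_left holding hch, mul_le_mul_of_nonneg_left backorder hcb,
    mul_le_mul_of_nonneg_left haL hch, mul_le_mul_of_nonneg_left haL hcb,
    mul_le_mul_of_nonneg_left hμ (by positivity : 0 ≤ cb + C * (N + 1))]

lemma IsAdmissible.bellman (hα0 : 0 ≤ α0) (hβ0 : 0 < β0) (hN : 1 ≤ N) (hcv : 0 ≤ cv)
    (hch : 0 ≤ ch) (hcb : 0 ≤ cb) (hW : IsAdmissible (W (t + 1)))
    (hWt : ∀ x k, W t x k = (⨅ a : {a : ℤ // x ≤ a}, G α0 β0 N cv ch cb W t a.1 k) - cv * x) :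
    IsAdmissible (W t) := by
  have hG_ge : ∀ k x (a : {a : ℤ // x ≤ a}), cv * x ≤ G α0 β0 N cv ch cb W t a k :=
    fun k x a => (mul_le_mul_of_nonneg_left (by exact_mod_cast a.2) hcv).trans
      (mul_le_G hα0 hβ0 hN hch hcb hW.nonneg a k)
  have hbdd : ∀ k x,
      BddBelow (Set.range fun a : {a : ℤ // x ≤ a} => G α0 β0 N cv ch cb W t a k) :=
    fun k x => ⟨cv * x, by rintro _ ⟨a, rfl⟩; exact hG_ge k x a⟩
  obtain ⟨K, hK0, hK⟩ := exists_G_sub_le (cv := cv) hα0 hβ0 hN hch hcb hW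
  refine ⟨fun x k => ?_, ⟨K, hK0, fun x k => ?_⟩, fun k => ?_⟩
  · rw [hWt, sub_nonneg]
    exact le_ciInf (hG_ge k x)
  · rw [hWt]
    linarith [ciInf_le (hbdd k x) ⟨x, le_rfl⟩, hK x k]
  · have := ((G_convex_of_isAdmissible hα0 hβ0 hN hch hcb hW k).iInf_Ici (hbdd k)).add
      (discreteConvex_mul_cast (-cv))
    simp only [neg_mul, ← sub_eq_add_neg, ← hWt] at this
    exact this

end Stage

lemma isAdmissible_of_bellman {α0 β0 : ℝ} (hα0 : 0 ≤ α0) (hβ0 : 0 < β0) {N T : ℕ} (hN : 1 ≤ N)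
    {cv ch cb : ℝ} (hcv : 0 ≤ cv) (hch : 0 ≤ ch) (hcb : 0 ≤ cb) {W : ℕ → ℤ → ℕ → ℝ}
    (hWT : ∀ x k, W T x k = 0)
    (hW : ∀ t, t < T → ∀ x k,
      W t x k = (⨅ a : {a : ℤ // x ≤ a}, G α0 β0 N cv ch cb W t a.1 k) - cv * (x : ℝ))
    {t : ℕ} (ht : t ≤ T) : IsAdmissible (W t) := by
  induction ht using Nat.decreasingInduction with
  | self =>
    refine ⟨fun x k => (hWT x k).ge, ⟨0, le_rfl, fun x k => by simp [hWT]⟩, fun k a => ?_⟩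
    simp [hWT]
  | of_succ t ht ih => exact ih.bellman hα0 hβ0 hN hcv hch hcb (hW t ht)

theorem G_convex_general
    (α0 β0 : ℝ) (hα0 : 0 < α0) (hβ0 : 0 < β0)
    (N T : ℕ) (hN : 1 ≤ N)
    (cv ch cb : ℝ) (hcv : 0 ≤ cv) (hch : 0 < ch) (hcb : 0 < cb)
    (W : ℕ → ℤ → ℕ → ℝ)
    (hWT : ∀ x k, W T x k = 0)
    (hW : ∀ t, t < T → ∀ x k,
      W t x k = (⨅ a : {a : ℤ // x ≤ a}, G α0 β0 N cv ch cb W t a.1 k) - cv * (x : ℝ)) :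
    ∀ t, t < T → ∀ (k : ℕ) (a : ℤ),
      2 * G α0 β0 N cv ch cb W t a k ≤
        G α0 β0 N cv ch cb W t (a + 1) k + G α0 β0 N cv ch cb W t (a - 1) k := fun _ ht k =>
  G_convex_of_isAdmissible hα0.le hβ0 hN hch.le hcb.le
    (isAdmissible_of_bellman hα0.le hβ0 hN hcv hch.le hcb.le hWT hW ht) k

/-- The function `a ↦ G_t(a,k)` is (discretely) convex on `ℤ`. -/
theorem G_convex
    (α0 β0 : ℝ) (hα0 : 0 < α0) (hβ0 : 0 < β0)
    (N T : ℕ) (hN : 1 ≤ N) (hT : 1 ≤ T)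
    (cv ch cb : ℝ) (hcv : 0 ≤ cv) (hch : 0 < ch) (hcb : 0 < cb)
    (W : ℕ → ℤ → ℕ → ℝ)
    (hWT : ∀ x k, W T x k = 0)
    (hW : ∀ t, t < T → ∀ x k,
      W t x k = (⨅ a : {a : ℤ // x ≤ a}, G α0 β0 N cv ch cb W t a.1 k) - cv * (x : ℝ)) :
    ∀ t, t < T → ∀ (k : ℕ) (a : ℤ),
      2 * G α0 β0 N cv ch cb W t a k ≤
        G α0 β0 N cv ch cb W t (a + 1) k + G α0 β0 N cv ch cb W t (a - 1) k :=
  G_convex_general α0 β0 hα0 hβ0 N T hN cv ch cb hcv hch hcb W hWT hW
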